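/- Proposition (strong convexity of the dilated entropy on chains of scaled extensions of simplexes). In the simplex chain-of-scaled-extensions setup, choose the coefficients recursively as α_n := 2 and α_k := 2 + 2·‖ Σ_{p=k}^{n−1} α_{p+1}·‖a_p‖₀·a_{p,k} ‖_∞ for k = n−1,…,1. Then for every x = (x_1,…,x_n) ∈ (relint Δ^{s_1}) ◁^{h_1} ⋯ ◁^{h_{n−1}} (relint Δ^{s_n}) and every m ∈ ℝ^{s_1+⋯+s_n}: m^⊤ ∇²ψ(x) m ≥ ‖m‖₂² and m^⊤ ∇²ψ(x) m ≥ (1/M_X)·‖m‖₁², where M_X := max_{x∈X} ‖x‖₁. That is, the dilated entropy is 1-strongly convex with respect to the Euclidean norm and (1/M_X)-strongly convex with respect to the ℓ₁ norm on relint X. -/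

import Mathlib

/-!
The Hessian of `ψ` splits into blocks. Write `hₖ = hₖ(m)`, `Hₖ = hₖ(x)`, `Sₖ = ∑ᵢ mₖᵢ` and
`Tₖ = ∑ᵢ mₖᵢ² / xₖᵢ`. Since `∑ᵢ xₖᵢ = Hₖ`, the perspective `∑ᵢ zₖᵢ log (zₖᵢ / hₖ(z))` contributes
`Tₖ - 2 Sₖ hₖ / Hₖ + hₖ² / Hₖ`. Cauchy–Schwarz gives `Sₖ² ≤ Hₖ Tₖ` and `hₖ² ≤ Hₖ Wₖ`, where
`Wₖ = ∑_{q<k} ∑ᵢ a_{k,q,i} m_{q,i}² / x_{q,i}`. Then `(Sₖ - 2 hₖ)² ≥ 0` bounds the block from below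
by `Tₖ / 2 - Wₖ`. Sum these bounds with the weights `αₖ` and exchange the order of summation.
The negative terms `Wₖ` are then absorbed, because the recursive choice of `α` gives
`α_q / 2 ≥ 1 + ∑_{p>q} α_p a_{p,q,i}`. Hence `mᵀ ∇²ψ(x) m ≥ ∑ m² / x`. This dominates `‖m‖₂²`
because `x ≤ 1`. By Cauchy–Schwarz it also dominates `‖m‖₁² / M_X`, because `‖x‖₁ ≤ M_X`.
-/

open Finset Filter Topology

section SecondDerivAlong

variable {E : Type*} [NormedAddCommGroup E] [NormedSpace ℝ E]

theorem iteratedFDeriv_two_apply_eq_fderiv_fderiv_apply {f : E → ℝ} {x : E}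
    (hf : ContDiffAt ℝ 2 f x) (m : E) :
    iteratedFDeriv ℝ 2 f x ![m, m] = fderiv ℝ (fun y => fderiv ℝ f y m) x m := by
  rw [iteratedFDeriv_two_apply,
    fderiv_clm_apply ((hf.fderiv_right le_rfl).differentiableAt one_ne_zero)
      (differentiableAt_const m)]
  simp

def HasSecondDerivAlong (f : E → ℝ) (x m : E) (c : ℝ) : Prop :=
  ContDiffAt ℝ 2 f x ∧ iteratedFDeriv ℝ 2 f x ![m, m] = c

namespace HasSecondDerivAlong

variable {f g : E → ℝ} {x m : E} {c d : ℝ}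

theorem congr_of_eventuallyEq (hf : HasSecondDerivAlong f x m c) (hg : g =ᶠ[𝓝 x] f) :
    HasSecondDerivAlong g x m c :=
  ⟨hf.1.congr_of_eventuallyEq hg, ((hg.iteratedFDeriv ℝ 2).eq_of_nhds).symm ▸ hf.2⟩

theorem add (hf : HasSecondDerivAlong f x m c) (hg : HasSecondDerivAlong g x m d) :
    HasSecondDerivAlong (fun z => f z + g z) x m (c + d) :=
  ⟨hf.1.add hg.1, by rw [fun_iteratedFDeriv_add_apply hf.1 hg.1]; simp [hf.2, hg.2]⟩

theorem sub (hf : HasSecondDerivAlong f x m c) (hg : HasSecondDerivAlong g x m d) :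
    HasSecondDerivAlong (fun z => f z - g z) x m (c - d) :=
  ⟨hf.1.sub hg.1, by rw [fun_iteratedFDeriv_sub_apply hf.1 hg.1]; simp [hf.2, hg.2]⟩

theorem const_mul (hf : HasSecondDerivAlong f x m c) (a : ℝ) :
    HasSecondDerivAlong (fun z => a * f z) x m (a * c) :=
  ⟨hf.1.const_smul a, by
    rw [show (fun z => a * f z) = fun z => a • f z from rfl, iteratedFDeriv_const_smul_apply' hf.1]
    simp [hf.2]⟩

theorem mul_const (hf : HasSecondDerivAlong f x m c) (a : ℝ) :
    HasSecondDerivAlong (fun z => f z * a) x m (c * a) := by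
  simpa only [mul_comm _ a] using hf.const_mul a

theorem sum {ι : Type*} (t : Finset ι) {f : ι → E → ℝ} {c : ι → ℝ}
    (hf : ∀ j ∈ t, HasSecondDerivAlong (f j) x m (c j)) :
    HasSecondDerivAlong (fun z => ∑ j ∈ t, f j z) x m (∑ j ∈ t, c j) :=
  ⟨ContDiffAt.sum fun j hj => (hf j hj).1, by
    rw [iteratedFDeriv_fun_sum_apply fun j hj => (hf j hj).1]
    simp only [_root_.sum_apply]
    exact sum_congr rfl fun j hj => (hf j hj).2⟩

end HasSecondDerivAlong

theorem hasSecondDerivAlong_const (a : ℝ) (x m : E) : HasSecondDerivAlong (fun _ => a) x m 0 :=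
  ⟨contDiffAt_const, by simp [iteratedFDeriv_const_of_ne]⟩

theorem ContinuousLinearMap.hasSecondDerivAlong (ℓ : E →L[ℝ] ℝ) (x m : E) :
    HasSecondDerivAlong ℓ x m 0 := by
  refine ⟨ℓ.contDiff.contDiffAt, ?_⟩
  rw [iteratedFDeriv_two_apply_eq_fderiv_fderiv_apply ℓ.contDiff.contDiffAt]
  simp

theorem hasSecondDerivAlong_mul_log (ℓ₁ ℓ₂ : E →L[ℝ] ℝ) {x : E} (hx : ℓ₂ x ≠ 0) (m : E) :
    HasSecondDerivAlong (fun z => ℓ₁ z * Real.log (ℓ₂ z)) x m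
      (2 * ℓ₁ m * ℓ₂ m / ℓ₂ x - ℓ₁ x * ℓ₂ m ^ 2 / ℓ₂ x ^ 2) := by
  have hf : ContDiffAt ℝ 2 (fun z => ℓ₁ z * Real.log (ℓ₂ z)) x := by fun_prop (disch := exact hx)
  have hderiv : (fun y => fderiv ℝ (fun z => ℓ₁ z * Real.log (ℓ₂ z)) y m)
      =ᶠ[𝓝 x] fun y => ℓ₁ y * (ℓ₂ y)⁻¹ * ℓ₂ m + ℓ₁ m * Real.log (ℓ₂ y) := by
    filter_upwards [ℓ₂.continuous.continuousAt.eventually_ne hx] with y hy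
    rw [(ℓ₁.hasFDerivAt.fun_mul (ℓ₂.hasFDerivAt.log hy)).fderiv]
    simp only [_root_.add_apply, _root_.smul_apply, smul_eq_mul]
    ring
  have hsecond : HasFDerivAt (fun y => ℓ₁ y * (ℓ₂ y)⁻¹ * ℓ₂ m + ℓ₁ m * Real.log (ℓ₂ y)) _ x :=
    ((ℓ₁.hasFDerivAt.fun_mul ((hasDerivAt_inv hx).comp_hasFDerivAt x ℓ₂.hasFDerivAt)).mul_const
      (ℓ₂ m)).add ((ℓ₂.hasFDerivAt.log hx).const_mul (ℓ₁ m))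
  refine ⟨hf, ?_⟩
  rw [iteratedFDeriv_two_apply_eq_fderiv_fderiv_apply hf, hderiv.fderiv_eq, hsecond.fderiv]
  simp only [neg_smul, smul_neg, Function.comp_apply, smul_add, _root_.add_apply,
    _root_.neg_apply, _root_.smul_apply, smul_eq_mul]
  field_simp
  ring

theorem hasSecondDerivAlong_mul_log_self (ℓ : E →L[ℝ] ℝ) {x : E} (hx : ℓ x ≠ 0) (m : E) :
    HasSecondDerivAlong (fun z => ℓ z * Real.log (ℓ z)) x m (ℓ m ^ 2 / ℓ x) := by
  convert hasSecondDerivAlong_mul_log ℓ ℓ hx m using 1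
  field_simp
  ring

theorem hasSecondDerivAlong_mul_log_div (ℓ₁ ℓ₂ : E →L[ℝ] ℝ) {x : E} (h₁ : ℓ₁ x ≠ 0)
    (h₂ : ℓ₂ x ≠ 0) (m : E) :
    HasSecondDerivAlong (fun z => ℓ₁ z * Real.log (ℓ₁ z / ℓ₂ z)) x m
      (ℓ₁ m ^ 2 / ℓ₁ x - (2 * ℓ₁ m * ℓ₂ m / ℓ₂ x - ℓ₁ x * ℓ₂ m ^ 2 / ℓ₂ x ^ 2)) := by
  refine ((hasSecondDerivAlong_mul_log_self ℓ₁ h₁ m).sub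
    (hasSecondDerivAlong_mul_log ℓ₁ ℓ₂ h₂ m)).congr_of_eventuallyEq ?_
  filter_upwards [ℓ₁.continuous.continuousAt.eventually_ne h₁,
    ℓ₂.continuous.continuousAt.eventually_ne h₂] with z hz₁ hz₂
  rw [Real.log_div hz₁ hz₂, mul_sub]

end SecondDerivAlong

section Inequalities

variable {ι : Type*}

theorem Finset.sq_sum_mul_le_sum_mul_mul_sum_mul_sq_div (t : Finset ι) {w x : ι → ℝ}
    (m : ι → ℝ) (hw : ∀ i ∈ t, 0 ≤ w i) (hx : ∀ i ∈ t, 0 < x i) :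
    (∑ i ∈ t, w i * m i) ^ 2 ≤ (∑ i ∈ t, w i * x i) * ∑ i ∈ t, w i * (m i ^ 2 / x i) := by
  refine sum_sq_le_sum_mul_sum_of_sq_le_mul t (fun i hi => mul_nonneg (hw i hi) (hx i hi).le)
    (fun i hi => mul_nonneg (hw i hi) (div_nonneg (sq_nonneg _) (hx i hi).le)) fun i hi => ?_
  have := (hx i hi).ne'
  field_simp
  rfl

theorem half_sum_sq_div_sub_le (t : Finset ι) {x : ι → ℝ} (m : ι → ℝ)
    (hx : ∀ i ∈ t, 0 < x i) {H h W : ℝ} (hxH : ∑ i ∈ t, x i = H) (hH : 0 < H)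
    (hhW : h ^ 2 ≤ H * W) :
    (∑ i ∈ t, m i ^ 2 / x i) / 2 - W ≤
      ∑ i ∈ t, (m i ^ 2 / x i - (2 * m i * h / H - x i * h ^ 2 / H ^ 2)) := by
  set T := ∑ i ∈ t, m i ^ 2 / x i
  set S := ∑ i ∈ t, m i
  have hST : S ^ 2 ≤ H * T := by
    simpa only [← hxH, Pi.one_apply, one_mul] using
      t.sq_sum_mul_le_sum_mul_mul_sum_mul_sq_div m (w := 1) (fun _ _ => zero_le_one) hx
  have hrhs : ∑ i ∈ t, (m i ^ 2 / x i - (2 * m i * h / H - x i * h ^ 2 / H ^ 2))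
      = T + (h ^ 2 - 2 * S * h) / H := by
    rw [sum_sub_distrib, sum_sub_distrib, ← sum_div, ← sum_div, ← sum_mul, ← sum_mul, hxH,
      ← mul_sum]
    field_simp
    ring
  -- AM-GM: `2 S h ≤ S² / 2 + 2 h²`
  have key : (-(T / 2) - W) * H ≤ h ^ 2 - 2 * S * h := by nlinarith [sq_nonneg (S - 2 * h)]
  rw [hrhs]
  linarith [(le_div_iff₀ hH).2 key]

theorem sum_le_sum_mul_half_sub [Fintype ι] [LinearOrder ι] {β : ι → Type*}
    [∀ k, Fintype (β k)] (a : (k q : ι) → β q → ℝ) (α : ι → ℝ) {τ : (k : ι) → β k → ℝ}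
    (hτ : ∀ k i, 0 ≤ τ k i)
    (hα : ∀ q i, 1 + ∑ p ∈ univ.filter (q < ·), α p * a p q i ≤ α q / 2) :
    ∑ k, ∑ i, τ k i ≤
      ∑ k, α k * ((∑ i, τ k i) / 2 - ∑ q ∈ univ.filter (· < k), ∑ i, a k q i * τ q i) := by
  have hswap : ∑ k, α k * ∑ q ∈ univ.filter (· < k), ∑ i, a k q i * τ q i
      = ∑ q, ∑ i, τ q i * ∑ p ∈ univ.filter (q < ·), α p * a p q i := by
    simp_rw [mul_sum]
    rw [sum_comm' (t' := univ) (s' := fun q => univ.filter (q < ·)) (by simp)]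
    refine sum_congr rfl fun q _ => ?_
    rw [sum_comm]
    exact sum_congr rfl fun i _ => sum_congr rfl fun p _ => by ring
  calc ∑ k, ∑ i, τ k i
      ≤ ∑ q, ∑ i, τ q i * (α q / 2 - ∑ p ∈ univ.filter (q < ·), α p * a p q i) := by
        gcongr with q _ i _
        exact le_mul_of_one_le_right (hτ q i) (by linarith [hα q i])
    _ = ∑ k, α k * (∑ i, τ k i) / 2
          - ∑ k, α k * ∑ q ∈ univ.filter (· < k), ∑ i, a k q i * τ q i := by
        rw [hswap, ← sum_sub_distrib]
        refine sum_congr rfl fun q _ => ?_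
        rw [mul_sum, sum_div, ← sum_sub_distrib]
        exact sum_congr rfl fun i _ => by ring
    _ = _ := by
        rw [← sum_sub_distrib]
        exact sum_congr rfl fun k _ => by ring

theorem one_div_mul_sq_sum_abs_le (t : Finset ι) {x : ι → ℝ} (m : ι → ℝ)
    (hx : ∀ i ∈ t, 0 < x i) {M : ℝ} (hM : ∑ i ∈ t, x i ≤ M) :
    1 / M * (∑ i ∈ t, |m i|) ^ 2 ≤ ∑ i ∈ t, m i ^ 2 / x i := by
  have hT : 0 ≤ ∑ i ∈ t, m i ^ 2 / x i :=
    sum_nonneg fun i hi => div_nonneg (sq_nonneg _) (hx i hi).le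
  rcases le_or_gt M 0 with hM0 | hM0
  · exact (mul_nonpos_of_nonpos_of_nonneg (one_div_nonpos.2 hM0) (sq_nonneg _)).trans hT
  have hCS := t.sq_sum_mul_le_sum_mul_mul_sum_mul_sq_div (fun i => |m i|) (w := 1)
    (fun _ _ => zero_le_one) hx
  simp only [Pi.one_apply, one_mul, sq_abs] at hCS
  rw [one_div, inv_mul_le_iff₀ hM0]
  exact hCS.trans (mul_le_mul_of_nonneg_right hM hT)

end Inequalities

theorem pos_of_mem_intrinsicInterior_stdSimplex {ι : Type*} [Fintype ι] [DecidableEq ι]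
    {v : ι → ℝ} (hv : v ∈ intrinsicInterior ℝ (stdSimplex ℝ ι)) (i : ι) : 0 < v i := by
  obtain ⟨w, hw, rfl⟩ := hv
  refine ((interior_subset hw : w ∈ Subtype.val ⁻¹' stdSimplex ℝ ι).1 i).lt_of_ne' fun hwi => ?_
  -- If `w i = 0`, the line from the vertex `eᵢ` through `w` leaves the simplex right after `w`,
  -- where its `i`-th coordinate becomes negative.
  have he : Pi.single i 1 ∈ affineSpan ℝ (stdSimplex ℝ ι) :=
    subset_affineSpan ℝ _ (single_mem_stdSimplex ℝ i)
  let c : ℝ → affineSpan ℝ (stdSimplex ℝ ι) := fun t =>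
    ⟨AffineMap.lineMap (Pi.single i 1) (w : ι → ℝ) t, AffineMap.lineMap_mem t he w.2⟩
  have hc : Tendsto c (𝓝 1) (𝓝 w) := by
    have : Continuous c := by fun_prop
    simpa [c] using this.tendsto 1
  obtain ⟨t, ht, ht1⟩ := ((hc.eventually (mem_interior_iff_mem_nhds.1 hw)).filter_mono
    nhdsWithin_le_nhds |>.and (self_mem_nhdsWithin (s := Set.Ioi 1))).exists
  have := ht.1 i
  simp only [c, AffineMap.lineMap_apply_module, Pi.add_apply, Pi.smul_apply, Pi.single_eq_same,
    smul_eq_mul, mul_one, hwi, mul_zero, add_zero, sub_nonneg] at this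
  linarith [show (1 : ℝ) < t from ht1]

section ChainOfSimplexes

variable {ι : Type*} {β : ι → Type*}

def coordCLM (k : ι) (i : β k) : ((k : ι) → β k → ℝ) →L[ℝ] ℝ :=
  (ContinuousLinearMap.proj (R := ℝ) (φ := fun _ : β k => ℝ) i).comp
    (ContinuousLinearMap.proj (R := ℝ) (φ := fun k => β k → ℝ) k)

@[simp] theorem coordCLM_apply (k : ι) (i : β k) (z : (k : ι) → β k → ℝ) :
    coordCLM k i z = z k i := rfl

variable [Fintype ι] [∀ k, Fintype (β k)] [LinearOrder ι]

noncomputable def scalingCLM (a : (k q : ι) → β q → ℝ) (k : ι) : ((k : ι) → β k → ℝ) →L[ℝ] ℝ :=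
  ∑ q ∈ univ.filter (· < k), ∑ i, a k q i • coordCLM q i

theorem scalingCLM_apply (a : (k q : ι) → β q → ℝ) (k : ι) (z : (k : ι) → β k → ℝ) :
    scalingCLM a k z = ∑ q ∈ univ.filter (· < k), ∑ i, a k q i * z q i := by
  simp [scalingCLM]

theorem sq_scalingCLM_le {a : (k q : ι) → β q → ℝ} (k : ι) (ha : ∀ q, q < k → ∀ i, 0 ≤ a k q i)
    {x : (k : ι) → β k → ℝ} (hx : ∀ k i, 0 < x k i) (m : (k : ι) → β k → ℝ) :
    scalingCLM a k m ^ 2 ≤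
      scalingCLM a k x * ∑ q ∈ univ.filter (· < k), ∑ i, a k q i * (m q i ^ 2 / x q i) := by
  simp only [scalingCLM_apply, sum_sigma']
  exact sq_sum_mul_le_sum_mul_mul_sum_mul_sq_div _ _
    (fun p hp => ha p.1 (by simpa using hp) p.2) fun p _ => hx p.1 p.2

noncomputable def nonzeroCount (a : (k q : ι) → β q → ℝ) (p : ι) : ℕ :=
  ∑ q ∈ univ.filter (· < p), (univ.filter fun i : β q => a p q i ≠ 0).card

theorem le_nonzeroCount_mul {a : (k q : ι) → β q → ℝ} {p q : ι} (hqp : q < p) {i : β q}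
    (ha : 0 ≤ a p q i) : a p q i ≤ nonzeroCount a p * a p q i := by
  rcases ha.eq_or_lt with h | h
  · simp [← h]
  refine le_mul_of_one_le_left ha (Nat.one_le_cast.2 ?_)
  calc 1 ≤ (univ.filter fun j : β q => a p q j ≠ 0).card :=
        card_pos.2 ⟨i, by simpa using h.ne'⟩
    _ ≤ nonzeroCount a p :=
        single_le_sum (f := fun q => (univ.filter fun j : β q => a p q j ≠ 0).card)
          (fun _ _ => Nat.zero_le _) (by simpa using hqp)

theorem nonneg_and_one_add_sum_mul_le_half [∀ k, Nonempty (β k)]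
    {a : (k q : ι) → β q → ℝ} {α : ι → ℝ} (ha : ∀ p q, q < p → ∀ i, 0 ≤ a p q i)
    (hα : ∀ q i, 2 + 2 * |∑ p ∈ univ.filter (q < ·), α p * nonzeroCount a p * a p q i| ≤ α q) :
    (∀ p, 0 ≤ α p) ∧ ∀ q i, 1 + ∑ p ∈ univ.filter (q < ·), α p * a p q i ≤ α q / 2 := by
  have hα0 : ∀ p, 0 ≤ α p := fun p => le_trans (by positivity) (hα p (Classical.arbitrary _))
  refine ⟨hα0, fun q i => ?_⟩
  have : ∑ p ∈ univ.filter (q < ·), α p * a p q i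
      ≤ ∑ p ∈ univ.filter (q < ·), α p * nonzeroCount a p * a p q i := by
    refine sum_le_sum fun p hp => ?_
    have hqp : q < p := by simpa using hp
    rw [mul_assoc]
    exact mul_le_mul_of_nonneg_left (le_nonzeroCount_mul hqp (ha p q hqp i)) (hα0 p)
  linarith [le_abs_self (∑ p ∈ univ.filter (q < ·), α p * nonzeroCount a p * a p q i), hα q i]

end ChainOfSimplexes

theorem Fin.sum_univ_eq_add_sum_filter_val_ne_zero {M : Type*} [AddCommMonoid M] {n : ℕ}
    (hn : 0 < n) (f : Fin n → M) :
    ∑ k, f k = f ⟨0, hn⟩ + ∑ k ∈ univ.filter (fun k : Fin n => k.val ≠ 0), f k := by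
  rw [← add_sum_erase univ f (mem_univ _)]
  congr 2
  ext k
  simp [Fin.ext_iff]

section DilatedEntropy

variable {n : ℕ} {s : Fin n → ℕ}

noncomputable def dilatedEntropy (hn : 0 < n) (α : Fin n → ℝ)
    (h : Fin n → ((k : Fin n) → Fin (s k) → ℝ) → ℝ) (x : (k : Fin n) → Fin (s k) → ℝ) : ℝ :=
  α ⟨0, hn⟩ * (Real.log (s ⟨0, hn⟩ : ℝ) + ∑ i, x ⟨0, hn⟩ i * Real.log (x ⟨0, hn⟩ i))
    + ∑ k ∈ univ.filter (fun k : Fin n => k.val ≠ 0),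
        α k * (h k x * Real.log (s k : ℝ) + ∑ i, x k i * Real.log (x k i / h k x))

theorem hasSecondDerivAlong_dilatedEntropy (hn : 0 < n) (α : Fin n → ℝ)
    (ℓ : Fin n → ((k : Fin n) → Fin (s k) → ℝ) →L[ℝ] ℝ) {x : (k : Fin n) → Fin (s k) → ℝ}
    (hx : ∀ k i, 0 < x k i) (hℓ : ∀ k : Fin n, k.val ≠ 0 → 0 < ℓ k x)
    (m : (k : Fin n) → Fin (s k) → ℝ) :
    HasSecondDerivAlong (dilatedEntropy hn α fun k => ℓ k) x m
      (α ⟨0, hn⟩ * ∑ i, m ⟨0, hn⟩ i ^ 2 / x ⟨0, hn⟩ i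
        + ∑ k ∈ univ.filter (fun k : Fin n => k.val ≠ 0), α k * ∑ i, (m k i ^ 2 / x k i
          - (2 * m k i * ℓ k m / ℓ k x - x k i * ℓ k m ^ 2 / ℓ k x ^ 2))) := by
  have hfirst := ((hasSecondDerivAlong_const (Real.log (s ⟨0, hn⟩ : ℝ)) x m).add
    (HasSecondDerivAlong.sum univ fun i _ =>
      hasSecondDerivAlong_mul_log_self (coordCLM ⟨0, hn⟩ i) (hx _ i).ne' m)).const_mul
    (α ⟨0, hn⟩)
  have hrest := HasSecondDerivAlong.sum (univ.filter fun k : Fin n => k.val ≠ 0) fun k hk =>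
    ((((ℓ k).hasSecondDerivAlong x m).mul_const (Real.log (s k : ℝ))).add
      (HasSecondDerivAlong.sum univ fun i _ => hasSecondDerivAlong_mul_log_div (coordCLM k i)
        (ℓ k) (hx k i).ne' (hℓ k (mem_filter.1 hk).2).ne' m)).const_mul (α k)
  convert hfirst.add hrest using 1
  · rfl
  · simp only [coordCLM_apply, zero_add, zero_mul]

theorem sum_sq_div_le_hessian_dilatedEntropy (hn : 0 < n) {a : (k q : Fin n) → Fin (s q) → ℝ}
    {α : Fin n → ℝ} (ha : ∀ p q, q < p → ∀ i, 0 ≤ a p q i) (hα0 : ∀ p, 0 ≤ α p)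
    (hα : ∀ q i, 1 + ∑ p ∈ univ.filter (q < ·), α p * a p q i ≤ α q / 2)
    {x : (k : Fin n) → Fin (s k) → ℝ} (hx : ∀ k i, 0 < x k i)
    (hH : ∀ k : Fin n, k.val ≠ 0 → 0 < scalingCLM a k x)
    (hxH : ∀ k : Fin n, k.val ≠ 0 → ∑ i, x k i = scalingCLM a k x)
    (m : (k : Fin n) → Fin (s k) → ℝ) :
    ∑ k, ∑ i, m k i ^ 2 / x k i ≤
      α ⟨0, hn⟩ * ∑ i, m ⟨0, hn⟩ i ^ 2 / x ⟨0, hn⟩ i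
        + ∑ k ∈ univ.filter (fun k : Fin n => k.val ≠ 0), α k * ∑ i, (m k i ^ 2 / x k i
          - (2 * m k i * scalingCLM a k m / scalingCLM a k x
            - x k i * scalingCLM a k m ^ 2 / scalingCLM a k x ^ 2)) := by
  set k₀ : Fin n := ⟨0, hn⟩
  have hτ : ∀ k i, 0 ≤ m k i ^ 2 / x k i := fun k i => div_nonneg (sq_nonneg _) (hx k i).le
  have hW₀ : ∑ q ∈ univ.filter (· < k₀), ∑ i, a k₀ q i * (m q i ^ 2 / x q i) = 0 := by
    simp [k₀, Fin.lt_def]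
  calc ∑ k, ∑ i, m k i ^ 2 / x k i
      ≤ ∑ k, α k * ((∑ i, m k i ^ 2 / x k i) / 2
          - ∑ q ∈ univ.filter (· < k), ∑ i, a k q i * (m q i ^ 2 / x q i)) :=
        sum_le_sum_mul_half_sub a α hτ hα
    _ = α k₀ * ((∑ i, m k₀ i ^ 2 / x k₀ i) / 2 - 0)
        + ∑ k ∈ univ.filter (fun k : Fin n => k.val ≠ 0), α k * ((∑ i, m k i ^ 2 / x k i) / 2
          - ∑ q ∈ univ.filter (· < k), ∑ i, a k q i * (m q i ^ 2 / x q i)) := by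
        rw [Fin.sum_univ_eq_add_sum_filter_val_ne_zero hn, hW₀]
    _ ≤ _ := by
        refine add_le_add (mul_le_mul_of_nonneg_left ?_ (hα0 k₀))
          (sum_le_sum fun k hk => mul_le_mul_of_nonneg_left ?_ (hα0 k))
        · linarith [sum_nonneg fun i (_ : i ∈ univ) => hτ k₀ i]
        · have hk : k.val ≠ 0 := (mem_filter.1 hk).2
          exact half_sum_sq_div_sub_le univ (m k) (fun i _ => hx k i) (hxH k hk) (hH k hk)
            (sq_scalingCLM_le k (ha k) hx m)

theorem pos_and_sum_eq_of_mem_intrinsicInterior_chain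
    {H : Fin n → ((k : Fin n) → Fin (s k) → ℝ) → ℝ} {x : (k : Fin n) → Fin (s k) → ℝ}
    (hx : ∀ k : Fin n,
        (k.val = 0 → x k ∈ intrinsicInterior ℝ (stdSimplex ℝ (Fin (s k)))) ∧
        (k.val ≠ 0 → ∃ v ∈ intrinsicInterior ℝ (stdSimplex ℝ (Fin (s k))), x k = H k x • v))
    (hH : ∀ k : Fin n, k.val ≠ 0 → 0 < H k x) :
    (∀ k i, 0 < x k i) ∧ (∀ k : Fin n, k.val = 0 → ∑ i, x k i = 1) ∧
      ∀ k : Fin n, k.val ≠ 0 → ∑ i, x k i = H k x := by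
  refine ⟨fun k i => ?_, fun k hk => (intrinsicInterior_subset ((hx k).1 hk)).2, fun k hk => ?_⟩
  · by_cases hk : k.val = 0
    · exact pos_of_mem_intrinsicInterior_stdSimplex ((hx k).1 hk) i
    · obtain ⟨v, hv, hxv⟩ := (hx k).2 hk
      rw [hxv]
      exact mul_pos (hH k hk) (pos_of_mem_intrinsicInterior_stdSimplex hv i)
  · obtain ⟨v, hv, hxv⟩ := (hx k).2 hk
    simp [hxv, ← mul_sum, (intrinsicInterior_subset hv).2]

end DilatedEntropy

/-- **Strong convexity of the dilated entropy on chains of scaled extensions of simplexes**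
(Proposition 3). With the coefficients chosen recursively as `α_n = 2`,
`α_k = 2 + 2·‖∑_{p>k} α_p·‖a_p‖₀·a_{p,k}‖_∞`, the dilated entropy `ψ` satisfies, at every
point `x` of `(relint Δ^{s_1}) ◁^{h_1} ⋯ ◁^{h_{n−1}} (relint Δ^{s_n})` and in every
direction `m`, `m^⊤ ∇²ψ(x) m ≥ ‖m‖₂²` and `m^⊤ ∇²ψ(x) m ≥ (1/M_X)·‖m‖₁²`, where
`M_X = max_{x∈X} ‖x‖₁`. -/
theorem simplex_chain_dilated_entropy_strong_convexity
    {n : ℕ} (hn : 0 < n)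
    (s : Fin n → ℕ) (hs : ∀ k, 0 < s k)
    (a : (k : Fin n) → (q : Fin n) → Fin (s q) → ℝ)
    (ha : ∀ k q, q < k → ∀ i, a k q i ∈ Set.Icc (0 : ℝ) 1)
    (H : Fin n → ((k : Fin n) → Fin (s k) → ℝ) → ℝ)
    (hHdef : ∀ k x, H k x = ∑ q ∈ Finset.univ.filter (fun q => q < k), ∑ i, a k q i * x q i)
    (memX memRelX : ((k : Fin n) → Fin (s k) → ℝ) → Prop)
    (hmemX : ∀ x, memX x ↔ ∀ k : Fin n,
        (k.val = 0 → x k ∈ stdSimplex ℝ (Fin (s k))) ∧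
        (k.val ≠ 0 → ∃ v ∈ stdSimplex ℝ (Fin (s k)), x k = H k x • v))
    (hmemRelX : ∀ x, memRelX x ↔ ∀ k : Fin n,
        (k.val = 0 → x k ∈ intrinsicInterior ℝ (stdSimplex ℝ (Fin (s k)))) ∧
        (k.val ≠ 0 → ∃ v ∈ intrinsicInterior ℝ (stdSimplex ℝ (Fin (s k))), x k = H k x • v))
    (hH01 : ∀ x, memX x → ∀ k : Fin n, k.val ≠ 0 → 0 ≤ H k x ∧ H k x ≤ 1)
    (hHpos : ∀ x, memRelX x → ∀ k : Fin n, k.val ≠ 0 → 0 < H k x)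
    (α : Fin n → ℝ)
    (hαrec : ∀ k : Fin n, α k = 2 + 2 *
        (Finset.univ.sup' (Finset.univ_nonempty_iff.mpr (Fin.pos_iff_nonempty.mp (hs k)))
          (fun i : Fin (s k) =>
            |∑ p ∈ Finset.univ.filter (fun p => k < p),
              α p * ((∑ q ∈ Finset.univ.filter (fun q => q < p),
                  (Finset.univ.filter (fun i : Fin (s q) => a p q i ≠ 0)).card : ℕ) : ℝ)
                * a p k i|)))
    (M : ℝ)
    (hM : IsGreatest ((fun x : (k : Fin n) → Fin (s k) → ℝ => ∑ k, ∑ i, |x k i|)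
        '' {x | memX x}) M)
    (ψ : ((k : Fin n) → Fin (s k) → ℝ) → ℝ)
    (hψ : ψ = fun x =>
      α ⟨0, hn⟩ * (Real.log ((s ⟨0, hn⟩ : ℝ)) + ∑ i, x ⟨0, hn⟩ i * Real.log (x ⟨0, hn⟩ i))
      + ∑ k ∈ Finset.univ.filter (fun k : Fin n => k.val ≠ 0),
          α k * (H k x * Real.log ((s k : ℝ))
            + ∑ i, x k i * Real.log (x k i / H k x))) :
    ∀ x, memRelX x → ∀ m : (k : Fin n) → Fin (s k) → ℝ,
      iteratedFDeriv ℝ 2 ψ x ![m, m] ≥ ∑ k, ∑ i, (m k i) ^ 2 ∧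
      iteratedFDeriv ℝ 2 ψ x ![m, m] ≥ (1 / M) * (∑ k, ∑ i, |m k i|) ^ 2 := by
  intro x hx m
  obtain rfl : H = fun k => ⇑(scalingCLM a k) :=
    funext₂ fun k z => by rw [hHdef, scalingCLM_apply]
  have hrel := (hmemRelX x).1 hx
  obtain ⟨hpos, hsum₀, hsumH⟩ := pos_and_sum_eq_of_mem_intrinsicInterior_chain hrel (hHpos x hx)
  have hxX : memX x := (hmemX x).2 fun k => ⟨fun hk => intrinsicInterior_subset ((hrel k).1 hk),
    fun hk => let ⟨v, hv, hxv⟩ := (hrel k).2 hk; ⟨v, intrinsicInterior_subset hv, hxv⟩⟩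
  have hle : ∀ k i, x k i ≤ 1 := fun k i =>
    (single_le_sum (fun j _ => (hpos k j).le) (mem_univ i)).trans <|
      if hk : k.val = 0 then (hsum₀ k hk).le else (hsumH k hk).trans_le (hH01 x hxX k hk).2
  have : ∀ k, Nonempty (Fin (s k)) := fun k => ⟨⟨0, hs k⟩⟩
  have ha₀ : ∀ p q, q < p → ∀ i, 0 ≤ a p q i := fun p q hqp i => (ha p q hqp i).1
  obtain ⟨hα0, hα⟩ := nonneg_and_one_add_sum_mul_le_half (α := α) ha₀ fun q i => by
    rw [hαrec q]
    gcongr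
    exact Finset.le_sup'
      (fun j => |∑ p ∈ univ.filter (q < ·), α p * (nonzeroCount a p : ℝ) * a p q j|) (mem_univ i)
  have key := sum_sq_div_le_hessian_dilatedEntropy hn ha₀ hα0 hα hpos (hHpos x hx) hsumH m
  rw [show ψ = dilatedEntropy hn α fun k => scalingCLM a k from hψ,
    (hasSecondDerivAlong_dilatedEntropy hn α _ hpos (hHpos x hx) m).2]
  refine ⟨(sum_le_sum fun k _ => sum_le_sum fun i _ =>
    le_div_self (sq_nonneg _) (hpos k i) (hle k i)).trans key, ?_⟩
  have hM' : ∑ p : (Σ k, Fin (s k)), x p.1 p.2 ≤ M := by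
    rw [Fintype.sum_sigma]
    simpa [abs_of_pos (hpos _ _)] using hM.2 ⟨x, hxX, rfl⟩
  have := one_div_mul_sq_sum_abs_le univ (fun p => m p.1 p.2) (fun p _ => hpos p.1 p.2) hM'
  rw [Fintype.sum_sigma, Fintype.sum_sigma] at this
  exact this.trans key
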